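/- Suppose the pushforward of the measure p(x)dx under r(x) := p(x)/g(x) is compactly supported inside (0,∞) and is the sum of an absolutely continuous measure and finitely many atoms. Let v̄, w ≥ 0 satisfy min{(1−γ)·∫_X r(x)^α g(x)dx + c, v̄} ≥ (1−γ)·sup_{x∈X} r(x)^α. Then every equilibrium with GenAI available under the revenue-threshold scheme (v̄, w) equals (β ≡ 1, q = g); and (β ≡ 1, q = g) is the unique equilibrium if either the displayed inequality is strict or v̄ + w ≤ (1−γ)·∫_X r(x)^α g(x)dx + c. -/

import Mathlib

open MeasureTheory Real Set Filter Topology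
open scoped ENNReal

noncomputable section

namespace GenAIPlatform

/-- `D(X)`: upper-semicontinuous densities on `X` with a positive lower bound. -/
def DSet {d : ℕ} (X : Set (Fin d → ℝ)) : Set ((Fin d → ℝ) → ℝ) :=
  {q | UpperSemicontinuousOn q X ∧ ∃ ε : ℝ, 0 < ε ∧ ∀ x ∈ X, ε ≤ q x}

/-- `P(X)`: probability densities on `X`. -/
def PSet {d : ℕ} (X : Set (Fin d → ℝ)) : Set ((Fin d → ℝ) → ℝ) :=
  {q | q ∈ DSet X ∧ ∫ x in X, q x = 1}

/-- The revenue `V(y;q)` of content `y` under content density `q`. -/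
def Rev {d : ℕ} (p : (Fin d → ℝ) → ℝ) (α γ : ℝ) (q : (Fin d → ℝ) → ℝ)
    (y : Fin d → ℝ) : ℝ :=
  (1 - γ) * (p y / q y) ^ α

/-- A compensation scheme `W(x;q)`. -/
abbrev Scheme (d : ℕ) := (Fin d → ℝ) → ((Fin d → ℝ) → ℝ) → ℝ

/-- Compensated revenue `V^W(y;q)`. -/
def RevW {d : ℕ} (p : (Fin d → ℝ) → ℝ) (α γ : ℝ) (W : Scheme d)
    (q : (Fin d → ℝ) → ℝ) (y : Fin d → ℝ) : ℝ :=
  Rev p α γ q y + W y q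

/-- Profit from manual creation `U^W(x;q)`. -/
def UtilW {d : ℕ} (p : (Fin d → ℝ) → ℝ) (α γ c : ℝ) (W : Scheme d)
    (q : (Fin d → ℝ) → ℝ) (x : Fin d → ℝ) : ℝ :=
  RevW p α γ W q x - c

/-- Expected compensated revenue from GenAI `V^W(g;q)`. -/
def RevWg {d : ℕ} (X : Set (Fin d → ℝ)) (p g : (Fin d → ℝ) → ℝ) (α γ : ℝ)
    (W : Scheme d) (q : (Fin d → ℝ) → ℝ) : ℝ :=
  ∫ y in X, RevW p α γ W q y * g y

/-- The revenue-threshold compensation scheme `(v, w)`. -/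
def Wthr {d : ℕ} (p : (Fin d → ℝ) → ℝ) (α γ v w : ℝ) : Scheme d :=
  fun x q => if v ≤ Rev p α γ q x then w else 0

/-- Platform profit `Π^W(q)` (per consumer). -/
def Profit {d : ℕ} (X : Set (Fin d → ℝ)) (p : (Fin d → ℝ) → ℝ) (α γ : ℝ)
    (W : Scheme d) (q : (Fin d → ℝ) → ℝ) : ℝ :=
  γ * ∫ x in X, p x ^ α * q x ^ (1 - α) - ∫ x in X, W x q * q x

/-- Mean-field equilibrium with GenAI available: `β` is the GenAI-usage propensity,
`q` the content density. -/
def IsEquilibrium {d : ℕ} (X : Set (Fin d → ℝ)) (p g : (Fin d → ℝ) → ℝ)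
    (α γ c : ℝ) (W : Scheme d) (β q : (Fin d → ℝ) → ℝ) : Prop :=
  (∀ x ∈ X, β x ∈ Icc (0 : ℝ) 1) ∧ q ∈ DSet X ∧
  (∀ x ∈ X, RevWg X p g α γ W q < UtilW p α γ c W q x → β x = 0) ∧
  (∀ x ∈ X, UtilW p α γ c W q x < RevWg X p g α γ W q → β x = 1) ∧
  (∀ x ∈ X, q x = (1 - β x) * p x + g x * ∫ y in X, β y * p y)

/-- The pushforward of the measure `p(x)dx` on `X` under `r(x) := p(x)/g(x)`. -/
def pushR {d : ℕ} (X : Set (Fin d → ℝ)) (p g : (Fin d → ℝ) → ℝ) : Measure ℝ :=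
  Measure.map (fun x => p x / g x)
    ((volume.restrict X).withDensity fun x => ENNReal.ofReal (p x))

end GenAIPlatform

/-!
Let `(β, q)` be an equilibrium, `B = ∫ β p` the GenAI share, `R` the expected GenAI revenue and
`V(·; q)` the revenue. Manual creators have density `e = (1 - β) p`, so `q - g = e - (1 - B) g`;
each of them has utility `U ≥ R`, while `∫ (U - R) g = -c`. Integrating against `q - g` gives
`c (1 - B) ≤ ∫ V(·; q) (q - g)`: the bonus does not help, since `V(x; q) ≥ v ≥ V(x; g)` forces
`q x ≤ g x`. The bound `V(·; g) ≤ ∫ V(·; g) g + c` gives `∫ V(·; g) (q - g) ≤ c (1 - B)`. Hence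
`∫ (V(·; q) - V(·; g)) (q - g) ≥ 0`, and as `t ↦ (p x / t) ^ α` is strictly decreasing, `q = g`
almost everywhere. Not everybody can create manually (that would make `∫ (U - R) g ≥ 0`), and at
a GenAI user with `q x = g x` the density equation forces `B = 1`. Then a manual creator would have
`q x > g x`, hence revenue below `V(x; g) ≤ v`, no bonus, and utility below `R`.
When `γ = 1` revenue vanishes and the bonus is the same for all, so everybody uses GenAI.
Conversely, in the pure-GenAI state every creator's utility is at most `∫ V(·; g) g ≤ R`.
-/

lemma strictAntiOn_mul_div_rpow {k P α : ℝ} (hk : 0 < k) (hP : 0 < P) (hα : 0 < α) :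
    StrictAntiOn (fun t : ℝ => k * (P / t) ^ α) (Ioi 0) := fun _ ha _ hb hab =>
  mul_lt_mul_of_pos_left
    (rpow_lt_rpow (div_pos hP hb).le (div_lt_div_of_pos_left hP ha hab) hα) hk

lemma StrictAntiOn.sub_mul_sub_nonpos {f : ℝ → ℝ} {s : Set ℝ} (hf : StrictAntiOn f s)
    {a b : ℝ} (ha : a ∈ s) (hb : b ∈ s) : (f a - f b) * (a - b) ≤ 0 := by
  rcases lt_trichotomy a b with hab | rfl | hab
  · exact mul_nonpos_of_nonneg_of_nonpos (sub_nonneg.2 (hf ha hb hab).le) (by linarith)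
  · simp
  · exact mul_nonpos_of_nonpos_of_nonneg (sub_nonpos.2 (hf hb ha hab).le) (by linarith)

lemma StrictAntiOn.eq_of_sub_mul_sub_nonneg {f : ℝ → ℝ} {s : Set ℝ} (hf : StrictAntiOn f s)
    {a b : ℝ} (ha : a ∈ s) (hb : b ∈ s) (h : 0 ≤ (f a - f b) * (a - b)) : a = b := by
  by_contra hne
  rcases lt_or_gt_of_ne hne with hab | hab
  · nlinarith [hf ha hb hab]
  · nlinarith [hf hb ha hab]

namespace GenAIPlatform

section

variable {d : ℕ} {X : Set (Fin d → ℝ)} {p g β q : (Fin d → ℝ) → ℝ} {α γ c v w : ℝ}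
  {W : Scheme d}

lemma pos_of_mem_DSet (hq : q ∈ DSet X) {x : Fin d → ℝ} (hx : x ∈ X) : 0 < q x := by
  obtain ⟨-, ε, hε, hεq⟩ := hq
  exact hε.trans_le (hεq x hx)

lemma aemeasurable_of_mem_DSet (hX : MeasurableSet X) (hq : q ∈ DSet X) :
    AEMeasurable q (volume.restrict X) :=
  aemeasurable_restrict_of_measurable_subtype hX
    (upperSemicontinuousOn_iff_restrict.2 hq.1).measurable

lemma exists_le_of_mem_DSet (hX : IsCompact X) (hq : q ∈ DSet X) :
    ∃ C, ∀ x ∈ X, q x ≤ C := by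
  obtain ⟨C, hC⟩ := hq.1.bddAbove_of_isCompact hX
  exact ⟨C, fun x hx => hC (mem_image_of_mem q hx)⟩

lemma memLp_top_of_mem_DSet (hX : IsCompact X) (hq : q ∈ DSet X) :
    MemLp q ⊤ (volume.restrict X) := by
  obtain ⟨C, hC⟩ := exists_le_of_mem_DSet hX hq
  refine memLp_top_of_bound (aemeasurable_of_mem_DSet hX.measurableSet hq).aestronglyMeasurable
    C (ae_restrict_of_forall_mem hX.measurableSet fun x hx => ?_)
  rw [norm_of_nonneg (pos_of_mem_DSet hq hx).le]
  exact hC x hx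

lemma integrableOn_of_memLp_top (hX : IsCompact X) {f : (Fin d → ℝ) → ℝ}
    (hf : MemLp f ⊤ (volume.restrict X)) : IntegrableOn f X := by
  have := isFiniteMeasure_restrict.2 (hX.measure_lt_top (μ := volume)).ne
  exact hf.integrable le_top

lemma exists_rpow_div_le (hX : IsCompact X) (hp : p ∈ DSet X) (hq : q ∈ DSet X) (hα : 0 ≤ α) :
    ∃ C, ∀ x ∈ X, (p x / q x) ^ α ≤ C := by
  obtain ⟨C, hC⟩ := exists_le_of_mem_DSet hX hp
  obtain ⟨-, ε, hε, hεq⟩ := hq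
  refine ⟨(C / ε) ^ α, fun x hx => rpow_le_rpow (div_pos (pos_of_mem_DSet hp hx)
    (hε.trans_le (hεq x hx))).le (div_le_div₀ ((pos_of_mem_DSet hp hx).le.trans (hC x hx))
      (hC x hx) hε (hεq x hx)) hα⟩

lemma aemeasurable_rev (hX : MeasurableSet X) (hp : p ∈ DSet X) (hq : q ∈ DSet X) :
    AEMeasurable (Rev p α γ q) (volume.restrict X) :=
  ((aemeasurable_of_mem_DSet hX hp).div (aemeasurable_of_mem_DSet hX hq)).pow_const α
    |>.const_mul (1 - γ)

lemma memLp_top_rev (hX : IsCompact X) (hp : p ∈ DSet X) (hq : q ∈ DSet X) (hα : 0 ≤ α) :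
    MemLp (Rev p α γ q) ⊤ (volume.restrict X) := by
  obtain ⟨C, hC⟩ := exists_rpow_div_le hX hp hq hα
  refine memLp_top_of_bound (aemeasurable_rev hX.measurableSet hp hq).aestronglyMeasurable
    (|1 - γ| * C) (ae_restrict_of_forall_mem hX.measurableSet fun x hx => ?_)
  have hpq := div_pos (pos_of_mem_DSet hp hx) (pos_of_mem_DSet hq hx)
  rw [Rev, norm_mul, norm_of_nonneg (rpow_nonneg hpq.le α), norm_eq_abs]
  exact mul_le_mul_of_nonneg_left (hC x hx) (abs_nonneg _)

lemma memLp_top_wthr (hX : IsCompact X) (hp : p ∈ DSet X) (hq : q ∈ DSet X) :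
    MemLp (fun x => Wthr p α γ v w x q) ⊤ (volume.restrict X) := by
  have hstep : Measurable fun t : ℝ => if v ≤ t then w else 0 :=
    Measurable.ite measurableSet_Ici measurable_const measurable_const
  refine memLp_top_of_bound (hstep.comp_aemeasurable
    (aemeasurable_rev hX.measurableSet hp hq)).aestronglyMeasurable |w|
    (Eventually.of_forall fun x => ?_)
  simp only [Wthr]
  split_ifs <;> simp

lemma memLp_top_revW (hX : IsCompact X) (hp : p ∈ DSet X) (hq : q ∈ DSet X) (hα : 0 ≤ α) :
    MemLp (RevW p α γ (Wthr p α γ v w) q) ⊤ (volume.restrict X) :=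
  (memLp_top_rev hX hp hq hα).add (memLp_top_wthr hX hp hq)

lemma strictAntiOn_rev (hα : 0 < α) (hγ : γ < 1) {x : Fin d → ℝ} (hpx : 0 < p x) :
    StrictAntiOn (fun t => Rev p α γ (fun _ => t) x) (Ioi 0) :=
  strictAntiOn_mul_div_rpow (sub_pos.2 hγ) hpx hα

lemma rev_le_mul_sSup (hX : IsCompact X) (hp : p ∈ DSet X) (hg : g ∈ DSet X) (hα : 0 ≤ α)
    (hγ : γ ≤ 1) {x : Fin d → ℝ} (hx : x ∈ X) :
    Rev p α γ g x ≤ (1 - γ) * sSup ((fun x => (p x / g x) ^ α) '' X) := by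
  obtain ⟨C, hC⟩ := exists_rpow_div_le hX hp hg hα
  exact mul_le_mul_of_nonneg_left
    (le_csSup ⟨C, forall_mem_image.2 hC⟩ (mem_image_of_mem _ hx)) (sub_nonneg.2 hγ)

lemma integral_rev_mul :
    ∫ x in X, Rev p α γ g x * g x = (1 - γ) * ∫ x in X, (p x / g x) ^ α * g x := by
  rw [← integral_const_mul]
  simp only [Rev, mul_assoc]

lemma IsEquilibrium.eqOn_of_forall_eq_one (heq : IsEquilibrium X p g α γ c W β q)
    (hX : MeasurableSet X) (hp : ∫ x in X, p x = 1) (hβ : ∀ x ∈ X, β x = 1) :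
    ∀ x ∈ X, q x = g x := by
  obtain ⟨-, -, -, -, hqeq⟩ := heq
  have hB : ∫ x in X, β x * p x = 1 := by
    rw [← hp]
    exact setIntegral_congr_fun hX fun x hx => by simp [hβ x hx]
  intro x hx
  rw [hqeq x hx, hβ x hx, hB]
  ring

lemma IsEquilibrium.integral_eq_one (heq : IsEquilibrium X p g α γ c W β q)
    (hX : IsCompact X) (hp : ∫ x in X, p x = 1) (hg : ∫ x in X, g x = 1) :
    ∫ x in X, q x = 1 := by
  obtain ⟨-, hq, -, -, hqeq⟩ := heq
  set B := ∫ x in X, β x * p x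
  have hβp : B = ∫ x in X, (p x + B * g x - q x) :=
    setIntegral_congr_fun hX.measurableSet fun x hx => by
      simp only [hqeq x hx]; ring
  have hpi : IntegrableOn p X := integrable_of_integral_eq_one hp
  have hgi : IntegrableOn (fun x => B * g x) X := (integrable_of_integral_eq_one hg).const_mul B
  rw [integral_sub (f := fun x => p x + B * g x) (hpi.add hgi)
      (integrableOn_of_memLp_top hX (memLp_top_of_mem_DSet hX hq)),
    integral_add hpi hgi, integral_const_mul, hp, hg] at hβp
  linarith

lemma integral_utilW_sub_revWg_mul (hg : ∫ x in X, g x = 1)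
    (hint : IntegrableOn (fun x => RevW p α γ W q x * g x) X) :
    ∫ x in X, (UtilW p α γ c W q x - RevWg X p g α γ W q) * g x = -c := by
  have hsplit : (fun x => (UtilW p α γ c W q x - RevWg X p g α γ W q) * g x) =
      fun x => RevW p α γ W q x * g x - (c + RevWg X p g α γ W q) * g x := by
    ext x; simp only [UtilW]; ring
  rw [hsplit, integral_sub hint ((integrable_of_integral_eq_one hg).const_mul _),
    integral_const_mul, hg, ← RevWg]
  ring

lemma IsEquilibrium.frequently_eq_one (heq : IsEquilibrium X p g α γ c W β q)
    (hX : MeasurableSet X) (hg : g ∈ PSet X) (hc : 0 < c)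
    (hint : IntegrableOn (fun x => RevW p α γ W q x * g x) X) :
    ∃ᵐ x ∂(volume.restrict X), β x = 1 := by
  obtain ⟨-, -, -, hβ1, -⟩ := heq
  by_contra hne
  rw [not_frequently] at hne
  have hnonneg : 0 ≤ ∫ x in X, (UtilW p α γ c W q x - RevWg X p g α γ W q) * g x := by
    refine integral_nonneg_of_ae ?_
    filter_upwards [hne, ae_restrict_mem hX] with x hβx hx
    exact mul_nonneg (sub_nonneg.2 (not_lt.1 (mt (hβ1 x hx) hβx)))
      (pos_of_mem_DSet hg.1 hx).le
  rw [integral_utilW_sub_revWg_mul hg.2 hint] at hnonneg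
  linarith

lemma IsEquilibrium.integral_mul_eq_one_of_ae_eq
    (heq : IsEquilibrium X p g α γ c W β q) (hX : MeasurableSet X) (hg : g ∈ DSet X)
    (hβ : ∃ᵐ x ∂(volume.restrict X), β x = 1) (hqg : q =ᵐ[volume.restrict X] g) :
    ∫ x in X, β x * p x = 1 := by
  obtain ⟨-, -, -, -, hqeq⟩ := heq
  obtain ⟨x, hβx, hqx, hx⟩ := (hβ.and_eventually (hqg.and (ae_restrict_mem hX))).exists
  have hgx := pos_of_mem_DSet hg hx
  have hdensity := hqeq x hx
  rw [hβx, hqx, sub_self, zero_mul, zero_add] at hdensity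
  nlinarith

lemma IsEquilibrium.mul_one_sub_le_integral_revW_mul (heq : IsEquilibrium X p g α γ c W β q)
    (hX : IsCompact X) (hp : p ∈ PSet X) (hg : g ∈ PSet X)
    (hW : MemLp (RevW p α γ W q) ⊤ (volume.restrict X)) :
    c * (1 - ∫ x in X, β x * p x) ≤ ∫ x in X, RevW p α γ W q x * (q x - g x) := by
  have hmass := heq.integral_eq_one hX hp.2 hg.2
  obtain ⟨hβ01, hqD, -, hβ1, hqeq⟩ := heq
  set B := ∫ x in X, β x * p x
  set R := RevWg X p g α γ W q
  set T := fun x => UtilW p α γ c W q x - R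
  set e := fun x => (1 - β x) * p x
  have hq := memLp_top_of_mem_DSet hX hqD
  have hg' := memLp_top_of_mem_DSet hX hg.1
  have he : MemLp e ⊤ (volume.restrict X) :=
    (hq.sub (hg'.const_mul B)).ae_eq <| ae_restrict_of_forall_mem hX.measurableSet fun x hx => by
      simp only [Pi.sub_apply, e, hqeq x hx]; ring
  have hT : MemLp T ⊤ (volume.restrict X) :=
    (hW.sub (memLp_top_const (c + R))).ae_eq <| Eventually.of_forall fun x => by
      simp only [Pi.sub_apply, T, UtilW]; ring
  have hTe : 0 ≤ ∫ x in X, T x * e x := by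
    refine setIntegral_nonneg hX.measurableSet fun x hx => ?_
    by_cases hβx : β x = 1
    · simp [e, hβx]
    · exact mul_nonneg (sub_nonneg.2 (not_lt.1 (mt (hβ1 x hx) hβx)))
        (mul_nonneg (sub_nonneg.2 (hβ01 x hx).2) (pos_of_mem_DSet hp.1 hx).le)
  have hTg : ∫ x in X, T x * g x = -c :=
    integral_utilW_sub_revWg_mul hg.2 (integrableOn_of_memLp_top hX (hg'.mul' hW))
  -- `q - g = e - (1 - B) g` on `X`, and the last term integrates to `0`
  have hpt : ∀ x ∈ X, RevW p α γ W q x * (q x - g x) =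
      T x * e x - (1 - B) * (T x * g x) + (c + R) * (q x - g x) := fun x hx => by
    simp only [T, e, UtilW, hqeq x hx]; ring
  rw [setIntegral_congr_fun hX.measurableSet hpt,
    integral_add (f := fun x => T x * e x - (1 - B) * (T x * g x))
      (g := fun x => (c + R) * (q x - g x)) ((integrableOn_of_memLp_top hX (he.mul' hT)).sub
      ((integrableOn_of_memLp_top hX (hg'.mul' hT)).const_mul _))
      ((integrableOn_of_memLp_top hX (hq.sub hg')).const_mul _),
    integral_sub (f := fun x => T x * e x) (integrableOn_of_memLp_top hX (he.mul' hT))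
      ((integrableOn_of_memLp_top hX (hg'.mul' hT)).const_mul _),
    integral_const_mul, integral_const_mul, hTg,
    integral_sub (f := q) (integrableOn_of_memLp_top hX hq) (integrableOn_of_memLp_top hX hg'),
    hmass, hg.2]
  linarith

lemma IsEquilibrium.integral_mul_sub_le (heq : IsEquilibrium X p g α γ c W β q)
    (hX : IsCompact X) (hp : p ∈ PSet X) (hg : g ∈ PSet X) {f : (Fin d → ℝ) → ℝ}
    (hf : MemLp f ⊤ (volume.restrict X)) (hfK : ∀ x ∈ X, f x ≤ (∫ y in X, f y * g y) + c) :
    ∫ x in X, f x * (q x - g x) ≤ c * (1 - ∫ x in X, β x * p x) := by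
  have hmass := heq.integral_eq_one hX hp.2 hg.2
  obtain ⟨hβ01, hqD, -, -, hqeq⟩ := heq
  set B := ∫ x in X, β x * p x
  set K := ∫ y in X, f y * g y
  have hq := memLp_top_of_mem_DSet hX hqD
  have hg' := memLp_top_of_mem_DSet hX hg.1
  have iδ : IntegrableOn (fun x => q x - g x) X := integrableOn_of_memLp_top hX (hq.sub hg')
  have ig : IntegrableOn (fun x => (K + c) * g x) X :=
    (integrableOn_of_memLp_top hX hg').const_mul _
  have ifg : IntegrableOn (fun x => f x * g x) X := integrableOn_of_memLp_top hX (hg'.mul' hf)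
  -- `f e ≤ (K + c) e` for the density `e = (1 - β) p = (q - g) + (1 - B) g` of manual creators
  have hpt : ∀ x ∈ X, f x * (q x - g x) ≤
      (K + c) * (q x - g x) + (1 - B) * ((K + c) * g x - f x * g x) := fun x hx => by
    have he : 0 ≤ (1 - β x) * p x :=
      mul_nonneg (sub_nonneg.2 (hβ01 x hx).2) (pos_of_mem_DSet hp.1 hx).le
    rw [hqeq x hx]
    nlinarith [mul_le_mul_of_nonneg_right (hfK x hx) he]
  have iRHS : IntegrableOn (fun x => (1 - B) * ((K + c) * g x - f x * g x)) X :=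
    (ig.sub ifg).const_mul _
  calc ∫ x in X, f x * (q x - g x)
      ≤ ∫ x in X, ((K + c) * (q x - g x) + (1 - B) * ((K + c) * g x - f x * g x)) :=
        setIntegral_mono_on (integrableOn_of_memLp_top hX ((hq.sub hg').mul' hf))
          ((iδ.const_mul _).add iRHS) hX.measurableSet hpt
    _ = c * (1 - B) := by
      rw [integral_add (iδ.const_mul _) iRHS, integral_const_mul,
        integral_const_mul, integral_sub (integrableOn_of_memLp_top hX hq)
          (integrableOn_of_memLp_top hX hg'), integral_sub ig ifg, integral_const_mul,
        hmass, hg.2]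
      ring

lemma wthr_mul_sub_nonpos (hα : 0 < α) (hγ : γ < 1) (hw : 0 ≤ w) {x : Fin d → ℝ}
    (hpx : 0 < p x) (hgx : 0 < g x) (hqx : 0 < q x) (hv : Rev p α γ g x ≤ v) :
    Wthr p α γ v w x q * (q x - g x) ≤ 0 := by
  unfold Wthr
  split_ifs with hvq
  · have hqg : q x ≤ g x :=
      ((strictAntiOn_rev hα hγ hpx).le_iff_ge hgx hqx).1 (hv.trans hvq)
    exact mul_nonpos_of_nonneg_of_nonpos hw (sub_nonpos.2 hqg)
  · simp

lemma integral_rev_mul_le_revWg (hX : IsCompact X) (hp : p ∈ DSet X) (hg : g ∈ DSet X)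
    (hq : q ∈ DSet X) (hα : 0 ≤ α) (hw : 0 ≤ w) (hqg : q =ᵐ[volume.restrict X] g) :
    ∫ x in X, Rev p α γ g x * g x ≤ RevWg X p g α γ (Wthr p α γ v w) q := by
  have hg' := memLp_top_of_mem_DSet hX hg
  calc ∫ x in X, Rev p α γ g x * g x = ∫ x in X, Rev p α γ q x * g x :=
        integral_congr_ae (by filter_upwards [hqg] with x hx; simp [Rev, hx])
    _ ≤ RevWg X p g α γ (Wthr p α γ v w) q :=
        setIntegral_mono_on (integrableOn_of_memLp_top hX (hg'.mul' (memLp_top_rev hX hp hq hα)))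
          (integrableOn_of_memLp_top hX (hg'.mul' (memLp_top_revW hX hp hq hα)))
          hX.measurableSet fun x hx => by
            have : 0 ≤ Wthr p α γ v w x q := by unfold Wthr; split_ifs <;> simp [hw]
            simp only [RevW]
            nlinarith [pos_of_mem_DSet hg hx]

lemma IsEquilibrium.integral_rev_sub_mul_nonneg
    (heq : IsEquilibrium X p g α γ c (Wthr p α γ v w) β q) (hX : IsCompact X)
    (hp : p ∈ PSet X) (hg : g ∈ PSet X) (hα : 0 < α) (hγ : γ < 1) (hw : 0 ≤ w)
    (hv : ∀ x ∈ X, Rev p α γ g x ≤ v)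
    (hK : ∀ x ∈ X, Rev p α γ g x ≤ (∫ y in X, Rev p α γ g y * g y) + c) :
    0 ≤ ∫ x in X, (Rev p α γ q x - Rev p α γ g x) * (q x - g x) := by
  have hq := heq.2.1
  have hδ : MemLp (fun x => q x - g x) ⊤ (volume.restrict X) :=
    (memLp_top_of_mem_DSet hX hq).sub (memLp_top_of_mem_DSet hX hg.1)
  have hRq := memLp_top_rev (γ := γ) hX hp.1 hq hα.le
  have hRg := memLp_top_rev (γ := γ) hX hp.1 hg.1 hα.le
  have hRWq := memLp_top_revW (γ := γ) (v := v) (w := w) hX hp.1 hq hα.le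
  have hequil := heq.mul_one_sub_le_integral_revW_mul hX hp hg hRWq
  have hbound := heq.integral_mul_sub_le hX hp hg hRg hK
  have hthreshold : ∫ x in X, RevW p α γ (Wthr p α γ v w) q x * (q x - g x) ≤
      ∫ x in X, Rev p α γ q x * (q x - g x) := by
    refine setIntegral_mono_on (integrableOn_of_memLp_top hX (hδ.mul' hRWq))
      (integrableOn_of_memLp_top hX (hδ.mul' hRq)) hX.measurableSet fun x hx => ?_
    have := wthr_mul_sub_nonpos (w := w) hα hγ hw (pos_of_mem_DSet hp.1 hx)
      (pos_of_mem_DSet hg.1 hx) (pos_of_mem_DSet hq hx) (hv x hx)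
    simp only [RevW]
    linarith
  simp_rw [sub_mul (Rev p α γ q _)]
  rw [integral_sub (integrableOn_of_memLp_top hX (hδ.mul' hRq))
    (integrableOn_of_memLp_top hX (hδ.mul' hRg))]
  linarith

lemma IsEquilibrium.ae_eq_of_wthr
    (heq : IsEquilibrium X p g α γ c (Wthr p α γ v w) β q) (hX : IsCompact X)
    (hp : p ∈ PSet X) (hg : g ∈ PSet X) (hα : 0 < α) (hγ : γ < 1) (hw : 0 ≤ w)
    (hv : ∀ x ∈ X, Rev p α γ g x ≤ v)
    (hK : ∀ x ∈ X, Rev p α γ g x ≤ (∫ y in X, Rev p α γ g y * g y) + c) :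
    q =ᵐ[volume.restrict X] g := by
  have hq := heq.2.1
  set F := fun x => (Rev p α γ q x - Rev p α γ g x) * (q x - g x)
  have hanti : ∀ x ∈ X, StrictAntiOn (fun t => Rev p α γ (fun _ => t) x) (Ioi 0) :=
    fun x hx => strictAntiOn_rev hα hγ (pos_of_mem_DSet hp.1 hx)
  have hF : ∀ x ∈ X, F x ≤ 0 := fun x hx => StrictAntiOn.sub_mul_sub_nonpos (hanti x hx)
    (pos_of_mem_DSet hq hx) (pos_of_mem_DSet hg.1 hx)
  have hFint : IntegrableOn F X := integrableOn_of_memLp_top hX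
    (((memLp_top_of_mem_DSet hX hq).sub (memLp_top_of_mem_DSet hX hg.1)).mul'
      ((memLp_top_rev hX hp.1 hq hα.le).sub (memLp_top_rev hX hp.1 hg.1 hα.le)))
  have hF0 : ∫ x in X, -F x = 0 := by
    rw [integral_neg, neg_eq_zero]
    exact le_antisymm (setIntegral_nonpos hX.measurableSet hF)
      (heq.integral_rev_sub_mul_nonneg hX hp hg hα hγ hw hv hK)
  have hFae := (integral_eq_zero_iff_of_nonneg_ae (ae_restrict_of_forall_mem hX.measurableSet
    fun x hx => neg_nonneg.2 (hF x hx)) hFint.neg).1 hF0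
  filter_upwards [hFae, ae_restrict_mem hX.measurableSet] with x hFx hx
  exact StrictAntiOn.eq_of_sub_mul_sub_nonneg (hanti x hx) (pos_of_mem_DSet hq hx)
    (pos_of_mem_DSet hg.1 hx) (neg_eq_zero.1 hFx).ge

lemma IsEquilibrium.forall_eq_one_of_gamma_lt_one
    (heq : IsEquilibrium X p g α γ c (Wthr p α γ v w) β q) (hX : IsCompact X)
    (hp : p ∈ PSet X) (hg : g ∈ PSet X) (hα : 0 < α) (hγ : γ < 1) (hc : 0 < c) (hw : 0 ≤ w)
    (hv : ∀ x ∈ X, Rev p α γ g x ≤ v)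
    (hK : ∀ x ∈ X, Rev p α γ g x ≤ (∫ y in X, Rev p α γ g y * g y) + c) :
    ∀ x ∈ X, β x = 1 := by
  have hqg := heq.ae_eq_of_wthr hX hp hg hα hγ hw hv hK
  have hB := heq.integral_mul_eq_one_of_ae_eq hX.measurableSet hg.1
    (heq.frequently_eq_one hX.measurableSet hg hc (integrableOn_of_memLp_top hX
      ((memLp_top_of_mem_DSet hX hg.1).mul' (memLp_top_revW hX hp.1 heq.2.1 hα.le)))) hqg
  obtain ⟨hβ01, hq, -, hβ1, hqeq⟩ := heq
  have hR := integral_rev_mul_le_revWg (γ := γ) (v := v) hX hp.1 hg.1 hq hα.le hw hqg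
  intro x hx
  by_contra hβx
  have hgq : g x < q x := by
    rw [hqeq x hx, hB]
    nlinarith [lt_of_le_of_ne (hβ01 x hx).2 hβx, pos_of_mem_DSet hp.1 hx]
  have hrev : Rev p α γ q x < Rev p α γ g x :=
    strictAntiOn_rev hα hγ (pos_of_mem_DSet hp.1 hx) (pos_of_mem_DSet hg.1 hx)
      (pos_of_mem_DSet hq hx) hgq
  have hW : Wthr p α γ v w x q = 0 := if_neg (not_le.2 (hrev.trans_le (hv x hx)))
  refine hβx (hβ1 x hx ?_)
  simp only [UtilW, RevW, hW]
  linarith [hK x hx]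

lemma IsEquilibrium.forall_eq_one_of_gamma_eq_one
    (heq : IsEquilibrium X p g α 1 c (Wthr p α 1 v w) β q) (hg : ∫ x in X, g x = 1)
    (hc : 0 < c) : ∀ x ∈ X, β x = 1 := by
  have hrev : ∀ y, Rev p α 1 q y = 0 := fun y => by simp [Rev]
  have hR : RevWg X p g α 1 (Wthr p α 1 v w) q = if v ≤ 0 then w else 0 := by
    simp only [RevWg, RevW, Wthr, hrev, zero_add]
    rw [integral_const_mul, hg, mul_one]
  obtain ⟨-, -, -, hβ1, -⟩ := heq
  intro x hx
  refine hβ1 x hx ?_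
  simp only [UtilW, RevW, Wthr, hrev, zero_add, hR]
  linarith

lemma IsEquilibrium.forall_eq_one
    (heq : IsEquilibrium X p g α γ c (Wthr p α γ v w) β q) (hX : IsCompact X)
    (hp : p ∈ PSet X) (hg : g ∈ PSet X) (hα : 0 < α) (hγ : γ ≤ 1) (hc : 0 < c) (hw : 0 ≤ w)
    (hv : ∀ x ∈ X, Rev p α γ g x ≤ v)
    (hK : ∀ x ∈ X, Rev p α γ g x ≤ (∫ y in X, Rev p α γ g y * g y) + c) :
    ∀ x ∈ X, β x = 1 := by
  rcases hγ.lt_or_eq with hγ | rfl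
  · exact heq.forall_eq_one_of_gamma_lt_one hX hp hg hα hγ hc hw hv hK
  · exact heq.forall_eq_one_of_gamma_eq_one hg.2 hc

lemma utilW_wthr_le {K : ℝ} {x : Fin d → ℝ} (hv : Rev p α γ g x ≤ v)
    (hK : Rev p α γ g x ≤ K + c) (hcase : Rev p α γ g x < v ∨ v + w ≤ K + c) :
    UtilW p α γ c (Wthr p α γ v w) g x ≤ K := by
  simp only [UtilW, RevW, Wthr]
  split_ifs with hvx
  · rcases hcase with h | h <;> linarith
  · linarith

lemma isEquilibrium_one_of_utilW_le (hX : IsCompact X) (hp : p ∈ PSet X) (hg : g ∈ PSet X)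
    (hα : 0 ≤ α) (hw : 0 ≤ w)
    (hU : ∀ x ∈ X, UtilW p α γ c (Wthr p α γ v w) g x ≤ ∫ y in X, Rev p α γ g y * g y) :
    IsEquilibrium X p g α γ c (Wthr p α γ v w) (fun _ => 1) g := by
  have hR := integral_rev_mul_le_revWg (γ := γ) (v := v) hX hp.1 hg.1 hg.1 hα hw
    (ae_eq_refl g)
  refine ⟨fun _ _ => ⟨zero_le_one, le_rfl⟩, hg.1,
    fun x hx h => absurd h (not_lt.2 ((hU x hx).trans hR)), fun _ _ _ => rfl, fun x _ => ?_⟩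
  simp [hp.2]

end

theorem stmt16_general {d : ℕ} (X : Set (Fin d → ℝ))
    (hXc : IsCompact X)
    (p g : (Fin d → ℝ) → ℝ) (hp : p ∈ PSet X) (hg : g ∈ PSet X)
    (α γ c : ℝ) (hα : α ∈ Ioo (0 : ℝ) 1) (hγ : γ ∈ Icc (0 : ℝ) 1) (hc : 0 < c)
    (v w : ℝ) (hw : 0 ≤ w)
    (hmin : (1 - γ) * sSup ((fun x => (p x / g x) ^ α) '' X) ≤
      min ((1 - γ) * (∫ x in X, (p x / g x) ^ α * g x) + c) v) :
    (∀ β q : (Fin d → ℝ) → ℝ,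
      IsEquilibrium X p g α γ c (Wthr p α γ v w) β q →
      (∀ x ∈ X, β x = 1) ∧ ∀ x ∈ X, q x = g x) ∧
    (((1 - γ) * sSup ((fun x => (p x / g x) ^ α) '' X) <
        min ((1 - γ) * (∫ x in X, (p x / g x) ^ α * g x) + c) v ∨
      v + w ≤ (1 - γ) * (∫ x in X, (p x / g x) ^ α * g x) + c) →
      IsEquilibrium X p g α γ c (Wthr p α γ v w) (fun _ => 1) g) := by
  have hM : ∀ x ∈ X, Rev p α γ g x ≤ (1 - γ) * sSup ((fun x => (p x / g x) ^ α) '' X) :=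
    fun x hx => rev_le_mul_sSup hXc hp.1 hg.1 hα.1.le hγ.2 hx
  rw [← integral_rev_mul] at hmin ⊢
  have hv : ∀ x ∈ X, Rev p α γ g x ≤ v := fun x hx =>
    (hM x hx).trans (hmin.trans (min_le_right _ _))
  have hK : ∀ x ∈ X, Rev p α γ g x ≤ (∫ y in X, Rev p α γ g y * g y) + c := fun x hx =>
    (hM x hx).trans (hmin.trans (min_le_left _ _))
  refine ⟨fun β q heq => ?_, fun hcase => ?_⟩
  · have hβ := heq.forall_eq_one hXc hp hg hα.1 hγ.2 hc hw hv hK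
    exact ⟨hβ, heq.eqOn_of_forall_eq_one hXc.measurableSet hp.2 hβ⟩
  · refine isEquilibrium_one_of_utilW_le hXc hp hg hα.1.le hw fun x hx =>
      utilW_wthr_le (hv x hx) (hK x hx) ?_
    exact hcase.imp_left fun h => (hM x hx).trans_lt (h.trans_le (min_le_right _ _))

/-- Proposition 3, "Pure-AI platform", forward direction. -/
theorem stmt16 {d : ℕ} (hd : 1 ≤ d) (X : Set (Fin d → ℝ))
    (hXc : IsCompact X) (hX0 : 0 < volume X)
    (p g : (Fin d → ℝ) → ℝ) (hp : p ∈ PSet X) (hg : g ∈ PSet X)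
    (α γ c : ℝ) (hα : α ∈ Ioo (0 : ℝ) 1) (hγ : γ ∈ Icc (0 : ℝ) 1) (hc : 0 < c)
    (hsupp : ∃ a b : ℝ, 0 < a ∧ pushR X p g (Icc a b)ᶜ = 0)
    (hdecomp : ∃ (μac : Measure ℝ) (s : Finset ℝ) (m : ℝ → ℝ≥0∞),
      μac ≪ volume ∧ pushR X p g = μac + ∑ i ∈ s, m i • Measure.dirac i)
    (v w : ℝ) (hv : 0 ≤ v) (hw : 0 ≤ w)
    (hmin : (1 - γ) * sSup ((fun x => (p x / g x) ^ α) '' X) ≤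
      min ((1 - γ) * (∫ x in X, (p x / g x) ^ α * g x) + c) v) :
    (∀ β q : (Fin d → ℝ) → ℝ,
      IsEquilibrium X p g α γ c (Wthr p α γ v w) β q →
      (∀ x ∈ X, β x = 1) ∧ ∀ x ∈ X, q x = g x) ∧
    (((1 - γ) * sSup ((fun x => (p x / g x) ^ α) '' X) <
        min ((1 - γ) * (∫ x in X, (p x / g x) ^ α * g x) + c) v ∨
      v + w ≤ (1 - γ) * (∫ x in X, (p x / g x) ^ α * g x) + c) →
      IsEquilibrium X p g α γ c (Wthr p α γ v w) (fun _ => 1) g) :=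
  stmt16_general X hXc p g hp hg α γ c hα hγ hc v w hw hmin

end GenAIPlatform
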